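/- Let 0 ≤ q_0 ≤ q_1 ≤ … ≤ q_{L+1} be reals and define γ_0 = √q_0 and γ_ℓ = √(q_ℓ − q_{ℓ−1}) for 1 ≤ ℓ ≤ L+1. If the hypotheses of the Parisi Kernel theorem hold with these γ_ℓ, i.e. E_ψ[ Σ_{i=1}^N δm_i^{α_1…α_ℓ} δm_i^{α'_1…α'_{ℓ'}} ] = N γ_ℓ² when the strings are identical and 0 otherwise, then for all full strings α, α' the averaged overlap satisfies E_ψ[ (1/N) Σ_{i=1}^N m_i^α m_i^{α'} ] = q_{ℓ*(α,α')}. -/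
import Mathlib


open Finset

/-- The spin value in Ω = {-1, 1} associated to a Boolean. -/
def spin (b : Bool) : ℝ := if b then 1 else -1

/-- Full strings α₁…α_{L+1} with 1 ≤ α_{ℓ+1} ≤ s_ℓ (0-indexed: α_{ℓ+1} ∈ Fin (s ℓ)). -/
abbrev FullStr (L : ℕ) (s : Fin (L + 1) → ℕ) := ∀ ℓ : Fin (L + 1), Fin (s ℓ)

/-- Two strings have the same prefix of length ℓ. -/
def prefixEq (L : ℕ) {s : Fin (L + 1) → ℕ} (ℓ : ℕ) (A A' : FullStr L s) : Prop :=
  ∀ k : Fin (L + 1), (k : ℕ) < ℓ → A k = A' k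

instance (L : ℕ) (s : Fin (L + 1) → ℕ) (ℓ : ℕ) (A A' : FullStr L s) :
    Decidable (prefixEq L ℓ A A') := by unfold prefixEq; infer_instance

/-- Block average m^{α₁…α_ℓ}: the average of the columns of `M` (labelled through the
bijection `θ`) over all extensions of the length-ℓ prefix of `A`. -/
noncomputable def blockAvg {N n L : ℕ} {s : Fin (L + 1) → ℕ}
    (M : Fin N → Fin n → Bool) (θ : FullStr L s ≃ Fin n)
    (ℓ : ℕ) (A : FullStr L s) (i : Fin N) : ℝ :=
  (∑ B ∈ univ.filter (fun B : FullStr L s => prefixEq L ℓ B A), spin (M i (θ B))) /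
    ((univ.filter (fun B : FullStr L s => prefixEq L ℓ B A)).card : ℝ)

/-- Magnetization increments δm^{α₁…α_ℓ} (with δm = m at the root level ℓ = 0). -/
noncomputable def incr {N n L : ℕ} {s : Fin (L + 1) → ℕ}
    (M : Fin N → Fin n → Bool) (θ : FullStr L s ≃ Fin n)
    (ℓ : ℕ) (A : FullStr L s) (i : Fin N) : ℝ :=
  if ℓ = 0 then blockAvg M θ 0 A i
  else blockAvg M θ ℓ A i - blockAvg M θ (ℓ - 1) A i

/-- ℓ*(α,α'): the largest ℓ ∈ {0,…,L+1} such that the length-ℓ prefixes agree. -/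
def lstar {L : ℕ} {s : Fin (L + 1) → ℕ} (A A' : FullStr L s) : ℕ :=
  ((Finset.range (L + 2)).filter (fun ℓ => prefixEq L ℓ A A')).sup id

-- AUX LEMMAS

lemma blockAvg_top {N n L : ℕ} {s : Fin (L + 1) → ℕ}
    (M : Fin N → Fin n → Bool) (θ : FullStr L s ≃ Fin n)
    (A : FullStr L s) (i : Fin N) :
    blockAvg M θ (L + 1) A i = spin (M i (θ A)) := by
  have hfilt : (univ.filter (fun B : FullStr L s => prefixEq L (L+1) B A)) = {A} := by
    ext B
    simp only [mem_filter, mem_univ, true_and, mem_singleton]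
    constructor
    · intro h; funext k; exact h k k.isLt
    · intro h; subst h; intro k _; rfl
  rw [blockAvg, hfilt]
  simp

lemma sum_incr {N n L : ℕ} {s : Fin (L + 1) → ℕ}
    (M : Fin N → Fin n → Bool) (θ : FullStr L s ≃ Fin n)
    (A : FullStr L s) (i : Fin N) (m : ℕ) :
    ∑ ℓ ∈ Finset.range (m + 1), incr M θ ℓ A i = blockAvg M θ m A i := by
  induction m with
  | zero => simp [incr]
  | succ m ih =>
      rw [Finset.sum_range_succ, ih, incr, if_neg (Nat.succ_ne_zero m)]
      simp only [Nat.add_sub_cancel]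
      ring

lemma sum_gamma_sq (L : ℕ) (q γ : ℕ → ℝ) (hq0 : 0 ≤ q 0)
    (hqmono : ∀ ℓ : ℕ, ℓ ≤ L → q ℓ ≤ q (ℓ + 1))
    (hγ0 : γ 0 = Real.sqrt (q 0))
    (hγ : ∀ ℓ : ℕ, 1 ≤ ℓ → ℓ ≤ L + 1 → γ ℓ = Real.sqrt (q ℓ - q (ℓ - 1)))
    (m : ℕ) (hm : m ≤ L + 1) :
    ∑ ℓ ∈ Finset.range (m + 1), (γ ℓ) ^ 2 = q m := by
  induction m with
  | zero => simp [hγ0, Real.sq_sqrt hq0]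
  | succ m ih =>
      rw [Finset.sum_range_succ, ih (Nat.le_of_succ_le hm),
        hγ (m+1) (Nat.succ_le_succ (Nat.zero_le m)) hm, Nat.add_sub_cancel,
        Real.sq_sqrt (sub_nonneg.mpr (hqmono m (Nat.succ_le_succ_iff.mp hm)))]
      ring

lemma prefixEq_mono {L : ℕ} {s : Fin (L+1) → ℕ} {ℓ ℓ' : ℕ} (h : ℓ ≤ ℓ')
    {A A' : FullStr L s} (hp : prefixEq L ℓ' A A') : prefixEq L ℓ A A' :=
  fun k hk => hp k (lt_of_lt_of_le hk h)

lemma prefixEq_zero (L : ℕ) {s : Fin (L+1) → ℕ} (A A' : FullStr L s) :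
    prefixEq L 0 A A' := fun _ hk => absurd hk (Nat.not_lt_zero _)

lemma lstar_mem {L : ℕ} {s : Fin (L+1) → ℕ} (A A' : FullStr L s) :
    lstar A A' ∈ (Finset.range (L+2)).filter (fun ℓ => prefixEq L ℓ A A') := by
  have hne : ((Finset.range (L+2)).filter (fun ℓ => prefixEq L ℓ A A')).Nonempty :=
    ⟨0, by simp [prefixEq_zero]⟩
  obtain ⟨b, hb, hsup⟩ := Finset.exists_mem_eq_sup _ hne id
  rw [lstar, hsup]; exact hb

lemma lstar_le {L : ℕ} {s : Fin (L+1) → ℕ} (A A' : FullStr L s) :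
    lstar A A' ≤ L + 1 := by
  have := (Finset.mem_filter.mp (lstar_mem A A')).1
  exact Nat.lt_succ_iff.mp (Finset.mem_range.mp this)

lemma prefixEq_lstar {L : ℕ} {s : Fin (L+1) → ℕ} (A A' : FullStr L s) :
    prefixEq L (lstar A A') A A' :=
  (Finset.mem_filter.mp (lstar_mem A A')).2

lemma prefixEq_iff_le_lstar {L : ℕ} {s : Fin (L+1) → ℕ} {ℓ : ℕ} (hℓ : ℓ ≤ L + 1)
    (A A' : FullStr L s) : prefixEq L ℓ A A' ↔ ℓ ≤ lstar A A' := by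
  constructor
  · intro hp
    exact Finset.le_sup (f := id)
      (Finset.mem_filter.mpr ⟨Finset.mem_range.mpr (Nat.lt_succ_of_le hℓ), hp⟩)
  · intro h
    exact prefixEq_mono h (prefixEq_lstar A A')

/-- Overlap in the q-variables: let 0 ≤ q₀ ≤ q₁ ≤ … ≤ q_{L+1} and
γ₀ = √q₀, γ_ℓ = √(q_ℓ − q_{ℓ-1}) for 1 ≤ ℓ ≤ L+1. If the Parisi Kernel hypotheses hold
with these γ_ℓ, i.e. E_ψ[Σ_i δm_i^{α₁…α_ℓ} δm_i^{α'₁…α'_{ℓ'}}] = N γ_ℓ² when the strings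
are identical and 0 otherwise, then E_ψ[(1/N) Σ_i m_i^α m_i^{α'}] = q_{ℓ*(α,α')}. -/
theorem overlap_eq_q_lstar
    (N n L : ℕ) (hN : 0 < N) (hn : 0 < n)
    (s : Fin (L + 1) → ℕ) (hs : ∀ ℓ, 0 < s ℓ) (hprod : ∏ ℓ, s ℓ = n)
    (ι : Type) [Fintype ι] (w : ι → ℝ) (hw0 : ∀ j, 0 ≤ w j) (hw1 : ∑ j, w j = 1)
    (Ms : ι → Fin N → Fin n → Bool) (θ : FullStr L s ≃ Fin n)
    (q : ℕ → ℝ) (hq0 : 0 ≤ q 0) (hqmono : ∀ ℓ : ℕ, ℓ ≤ L → q ℓ ≤ q (ℓ + 1))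
    (γ : ℕ → ℝ) (hγ0 : γ 0 = Real.sqrt (q 0))
    (hγ : ∀ ℓ : ℕ, 1 ≤ ℓ → ℓ ≤ L + 1 → γ ℓ = Real.sqrt (q ℓ - q (ℓ - 1)))
    (hTTC_SEC : ∀ ℓ ℓ' : ℕ, ℓ ≤ L + 1 → ℓ' ≤ L + 1 → ∀ A A' : FullStr L s,
      (∑ j, w j * ∑ i : Fin N, incr (Ms j) θ ℓ A i * incr (Ms j) θ ℓ' A' i) =
        if ℓ = ℓ' ∧ prefixEq L ℓ A A' then (N : ℝ) * (γ ℓ) ^ 2 else 0)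
    (A A' : FullStr L s) :
    (∑ j, w j * ((1 / (N : ℝ)) * ∑ i : Fin N, spin (Ms j i (θ A)) * spin (Ms j i (θ A')))) =
      q (lstar A A') := by
  have hNne : (N : ℝ) ≠ 0 := Nat.cast_ne_zero.mpr hN.ne'
  -- pointwise decomposition of the overlap
  have hspin : ∀ j : ι, (∑ i : Fin N, spin (Ms j i (θ A)) * spin (Ms j i (θ A'))) =
      ∑ ℓ ∈ Finset.range (L + 2), ∑ ℓ' ∈ Finset.range (L + 2),
        ∑ i : Fin N, incr (Ms j) θ ℓ A i * incr (Ms j) θ ℓ' A' i := by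
    intro j
    have h1 : ∀ i : Fin N, spin (Ms j i (θ A)) * spin (Ms j i (θ A')) =
        ∑ ℓ ∈ Finset.range (L + 2), ∑ ℓ' ∈ Finset.range (L + 2),
          incr (Ms j) θ ℓ A i * incr (Ms j) θ ℓ' A' i := by
      intro i
      rw [← blockAvg_top (Ms j) θ A i, ← blockAvg_top (Ms j) θ A' i,
        ← sum_incr (Ms j) θ A i (L + 1), ← sum_incr (Ms j) θ A' i (L + 1),
        Finset.sum_mul_sum]
    rw [Finset.sum_congr rfl (fun i _ => h1 i), Finset.sum_comm]
    exact Finset.sum_congr rfl fun ℓ _ => Finset.sum_comm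
  -- rearrange the left-hand side
  have hLHS : (∑ j, w j * ((1 / (N : ℝ)) *
        ∑ i : Fin N, spin (Ms j i (θ A)) * spin (Ms j i (θ A')))) =
      (1 / (N : ℝ)) * ∑ ℓ ∈ Finset.range (L + 2), ∑ ℓ' ∈ Finset.range (L + 2),
        ∑ j, w j * ∑ i : Fin N, incr (Ms j) θ ℓ A i * incr (Ms j) θ ℓ' A' i := by
    simp_rw [hspin, Finset.mul_sum]
    rw [Finset.sum_comm]
    refine Finset.sum_congr rfl fun ℓ _ => ?_
    rw [Finset.sum_comm]
    refine Finset.sum_congr rfl fun ℓ' _ => ?_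
    refine Finset.sum_congr rfl fun j _ => ?_
    exact Finset.sum_congr rfl fun i _ => by ring
  rw [hLHS]
  -- evaluate via the kernel hypothesis
  have hker : ∀ ℓ ∈ Finset.range (L + 2),
      (∑ ℓ' ∈ Finset.range (L + 2),
        ∑ j, w j * ∑ i : Fin N, incr (Ms j) θ ℓ A i * incr (Ms j) θ ℓ' A' i) =
      (if prefixEq L ℓ A A' then (N : ℝ) * (γ ℓ) ^ 2 else 0) := by
    intro ℓ hℓ
    have hℓ' : ℓ ≤ L + 1 := Nat.lt_succ_iff.mp (Finset.mem_range.mp hℓ)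
    have := fun ℓ'' (h : ℓ'' ∈ Finset.range (L + 2)) =>
      hTTC_SEC ℓ ℓ'' hℓ' (Nat.lt_succ_iff.mp (Finset.mem_range.mp h)) A A'
    rw [Finset.sum_congr rfl this]
    simp_rw [ite_and]
    rw [Finset.sum_ite_eq, if_pos hℓ]
  rw [Finset.sum_congr rfl hker]
  -- rewrite the condition using lstar
  have hcond : ∀ ℓ ∈ Finset.range (L + 2),
      (if prefixEq L ℓ A A' then (N : ℝ) * (γ ℓ) ^ 2 else 0) =
      (if ℓ ≤ lstar A A' then (N : ℝ) * (γ ℓ) ^ 2 else 0) := by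
    intro ℓ hℓ
    rw [if_congr (prefixEq_iff_le_lstar (Nat.lt_succ_iff.mp (Finset.mem_range.mp hℓ)) A A')
      rfl rfl]
  rw [Finset.sum_congr rfl hcond]
  have hsub : Finset.range (lstar A A' + 1) ⊆ Finset.range (L + 2) :=
    Finset.range_subset_range.mpr (Nat.succ_le_succ (lstar_le A A'))
  rw [← Finset.sum_subset hsub (fun ℓ _ hℓ => by
    rw [if_neg (fun h => hℓ (Finset.mem_range.mpr (Nat.lt_succ_of_le h)))])]
  have : ∀ ℓ ∈ Finset.range (lstar A A' + 1),
      (if ℓ ≤ lstar A A' then (N : ℝ) * (γ ℓ) ^ 2 else 0) = (N : ℝ) * (γ ℓ) ^ 2 := by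
    intro ℓ hℓ
    rw [if_pos (Nat.lt_succ_iff.mp (Finset.mem_range.mp hℓ))]
  rw [Finset.sum_congr rfl this, ← Finset.mul_sum,
    sum_gamma_sq L q γ hq0 hqmono hγ0 hγ (lstar A A') (lstar_le A A')]
  field_simp
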